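/- Define f(α) = KL(h₀ ‖ h) − KL(h₀ ‖ h^(α)) for strictly positive probability mass functions h₀, h on a finite set Θ with h non-uniform, where h^(α) is the α-scaling of h. Then f(α) = (α − 1)·Σ_θ h₀(θ) log h(θ) − log(Σ_θ h(θ)^α), f is strictly concave on [0, ∞), f(1) = 0, and f'(1) = Σ_θ [h₀(θ) − h(θ)] log h(θ). -/

import Mathlib

open Real Finset

/-!
Put `Z(α) = ∑ θ, h θ ^ α`. Normalising `h ^ α` contributes `-log Z(α)` to `f` and everything else
is affine in `α`, so `f(α) = (α - 1) ∑ h₀ log h - log Z(α)` for every real `α`. Hence `f` is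
strictly concave because `log Z` is strictly convex: `(log Z)''` is the variance of `log h` under
the weights `h ^ α / Z(α)`, which is positive by Lagrange's identity when `h` is not constant.
Finally `Z(1) = 1` and `Z'(1) = ∑ h log h` give `f(1) = 0` and the value of `f'(1)`.
-/

section

variable {ι : Type*} [Fintype ι]

section

variable (w x : ι → ℝ)

theorem sum_sum_mul_mul_sub_sq :
    ∑ i, ∑ j, w i * w j * (x i - x j) ^ 2
      = 2 * ((∑ i, w i) * (∑ i, w i * x i ^ 2) - (∑ i, w i * x i) ^ 2) := by
  have expand : ∀ i j, w i * w j * (x i - x j) ^ 2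
      = w i * x i ^ 2 * w j + w i * (w j * x j ^ 2) - 2 * (w i * x i) * (w j * x j) :=
    fun i j => by ring
  simp only [expand, sum_sub_distrib, sum_add_distrib, ← mul_sum, ← sum_mul]
  ring

variable {w x}

theorem sq_sum_mul_lt_sum_mul_sum_mul_sq (hw : ∀ i, 0 < w i) (hx : ∃ i j, x i ≠ x j) :
    (∑ i, w i * x i) ^ 2 < (∑ i, w i) * ∑ i, w i * x i ^ 2 := by
  obtain ⟨i, j, hij⟩ := hx
  have hterm : ∀ k l, 0 ≤ w k * w l * (x k - x l) ^ 2 := fun k l =>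
    mul_nonneg (mul_pos (hw k) (hw l)).le (sq_nonneg _)
  have hij_pos : 0 < w i * w j * (x i - x j) ^ 2 :=
    mul_pos (mul_pos (hw i) (hw j)) (sq_pos_of_ne_zero (sub_ne_zero.mpr hij))
  have : 0 < ∑ k, ∑ l, w k * w l * (x k - x l) ^ 2 :=
    sum_pos' (fun k _ => sum_nonneg fun l _ => hterm k l)
      ⟨i, mem_univ i, sum_pos' (fun l _ => hterm i l) ⟨j, mem_univ j, hij_pos⟩⟩
  rw [sum_sum_mul_mul_sub_sq] at this
  linarith

end

theorem sum_mul_log_div_sub_sum_mul_log_div (p q r : ι → ℝ) (hq : ∀ i, q i ≠ 0)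
    (hr : ∀ i, r i ≠ 0) :
    ∑ i, p i * log (p i / q i) - ∑ i, p i * log (p i / r i)
      = ∑ i, p i * (log (r i) - log (q i)) := by
  rw [← sum_sub_distrib]
  refine sum_congr rfl fun i _ => ?_
  rcases eq_or_ne (p i) 0 with hp | hp
  · simp [hp]
  · rw [log_div hp (hq i), log_div hp (hr i)]
    ring

variable {h : ι → ℝ}

theorem sum_rpow_pos [Nonempty ι] (hpos : ∀ i, 0 < h i) (α : ℝ) : 0 < ∑ i, h i ^ α :=
  sum_pos (fun i _ => rpow_pos_of_pos (hpos i) α) univ_nonempty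

theorem hasDerivAt_sum_rpow_mul (hpos : ∀ i, 0 < h i) (g : ι → ℝ) (α : ℝ) :
    HasDerivAt (fun β => ∑ i, h i ^ β * g i) (∑ i, h i ^ α * log (h i) * g i) α :=
  HasDerivAt.fun_sum fun i _ =>
    (hasStrictDerivAt_const_rpow (hpos i) α).hasDerivAt.mul_const (g i)

theorem hasDerivAt_sum_rpow (hpos : ∀ i, 0 < h i) (α : ℝ) :
    HasDerivAt (fun β => ∑ i, h i ^ β) (∑ i, h i ^ α * log (h i)) α := by
  simpa using hasDerivAt_sum_rpow_mul hpos 1 α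

theorem hasDerivAt_log_sum_rpow [Nonempty ι] (hpos : ∀ i, 0 < h i) (α : ℝ) :
    HasDerivAt (fun β => log (∑ i, h i ^ β))
      ((∑ i, h i ^ α * log (h i)) / ∑ i, h i ^ α) α :=
  (hasDerivAt_sum_rpow hpos α).log (sum_rpow_pos hpos α).ne'

theorem strictConvexOn_log_sum_rpow (hpos : ∀ i, 0 < h i) (hh : ∃ i j, h i ≠ h j) :
    StrictConvexOn ℝ Set.univ (fun α : ℝ => log (∑ i, h i ^ α)) := by
  obtain ⟨i, j, hij⟩ := hh
  have : Nonempty ι := ⟨i⟩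
  have hZ := hasDerivAt_sum_rpow hpos
  have hS := hasDerivAt_sum_rpow_mul hpos (fun i => log (h i))
  have hderiv : deriv (fun β : ℝ => log (∑ i, h i ^ β))
      = fun α => (∑ i, h i ^ α * log (h i)) / ∑ i, h i ^ α :=
    funext fun α => (hasDerivAt_log_sum_rpow hpos α).deriv
  refine StrictMono.strictConvexOn_univ_of_deriv
    (continuous_iff_continuousAt.2 fun α => (hasDerivAt_log_sum_rpow hpos α).continuousAt) ?_
  rw [hderiv]
  refine strictMono_of_deriv_pos fun α => ?_
  have hlog : log (h i) ≠ log (h j) := fun e => hij (log_injOn_pos (hpos i) (hpos j) e)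
  have hCS := sq_sum_mul_lt_sum_mul_sum_mul_sq (x := fun k => log (h k))
    (fun k => rpow_pos_of_pos (hpos k) α) ⟨i, j, hlog⟩
  rw [((hS α).fun_div (hZ α) (sum_rpow_pos hpos α).ne').deriv]
  refine div_pos ?_ (pow_pos (sum_rpow_pos hpos α) 2)
  simp only [mul_assoc, ← sq] at hCS ⊢
  linarith

theorem sum_mul_log_div_sub_sum_mul_log_div_rpow (hpos : ∀ i, 0 < h i) (p : ι → ℝ)
    (hp : ∑ i, p i = 1) (α : ℝ) :
    ∑ i, p i * log (p i / h i) - ∑ i, p i * log (p i / (h i ^ α / ∑ j, h j ^ α))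
      = (α - 1) * ∑ i, p i * log (h i) - log (∑ i, h i ^ α) := by
  have hZ : ∀ i, ∑ j, h j ^ α ≠ 0 := fun i =>
    have : Nonempty ι := ⟨i⟩
    (sum_rpow_pos hpos α).ne'
  have hrpow : ∀ i, h i ^ α ≠ 0 := fun i => (rpow_pos_of_pos (hpos i) α).ne'
  rw [sum_mul_log_div_sub_sum_mul_log_div p h _ (fun i => (hpos i).ne')
    (fun i => div_ne_zero (hrpow i) (hZ i))]
  calc ∑ i, p i * (log (h i ^ α / ∑ j, h j ^ α) - log (h i))
      = ∑ i, ((α - 1) * (p i * log (h i)) - p i * log (∑ j, h j ^ α)) := by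
        refine sum_congr rfl fun i _ => ?_
        rw [log_div (hrpow i) (hZ i), log_rpow (hpos i)]
        ring
    _ = (α - 1) * ∑ i, p i * log (h i) - log (∑ i, h i ^ α) := by
        rw [sum_sub_distrib, ← mul_sum, ← sum_mul, hp, one_mul]

end

theorem kl_gain_formula_concave_general
    {Θ : Type*} [Fintype Θ]
    (h₀ h : Θ → ℝ)
    (hpos : ∀ θ, 0 < h θ)
    (h₀sum : ∑ θ, h₀ θ = 1)
    (hsum : ∑ θ, h θ = 1)
    (hnonunif : ∃ θ₁ θ₂, h θ₁ ≠ h θ₂)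
    (f : ℝ → ℝ)
    (hf : f = fun α =>
      (∑ θ, h₀ θ * Real.log (h₀ θ / h θ)) -
        ∑ θ, h₀ θ * Real.log (h₀ θ / (h θ ^ α / ∑ θ', h θ' ^ α))) :
    (∀ α : ℝ, 0 ≤ α →
      f α = (α - 1) * (∑ θ, h₀ θ * Real.log (h θ)) -
        Real.log (∑ θ, h θ ^ α)) ∧
    StrictConcaveOn ℝ (Set.Ici 0) f ∧
    f 1 = 0 ∧
    HasDerivAt f (∑ θ, (h₀ θ - h θ) * Real.log (h θ)) 1 := by
  have : Nonempty Θ := hnonunif.elim fun θ _ => ⟨θ⟩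
  set c := ∑ θ, h₀ θ * log (h θ)
  have hf' : f = fun α => (α - 1) * c - log (∑ θ, h θ ^ α) :=
    hf.trans (funext (sum_mul_log_div_sub_sum_mul_log_div_rpow hpos h₀ h₀sum))
  have haffine : ConcaveOn ℝ (Set.Ici 0) (fun α : ℝ => (α - 1) * c) :=
    ⟨convex_Ici 0, fun x _ y _ a b _ _ hab => le_of_eq (by
      simp only [smul_eq_mul]
      linear_combination (-c) * hab)⟩
  rw [hf']
  refine ⟨fun α _ => rfl, ?_, by simp [hsum], ?_⟩
  · exact haffine.sub_strictConvexOn ((strictConvexOn_log_sum_rpow hpos hnonunif).subset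
      (Set.subset_univ _) (convex_Ici 0))
  · refine ((((hasDerivAt_id' 1).sub_const 1).mul_const c).fun_sub
      (hasDerivAt_log_sum_rpow hpos 1)).congr_deriv ?_
    simp [hsum, c, ← sum_sub_distrib, sub_mul]

/-- With `f(α) = KL(h₀‖h) − KL(h₀‖h^(α))` for strictly positive pmfs
`h₀, h` on a finite set, `h` non-uniform: `f(α) = (α−1)·Σ h₀ log h − log(Σ h^α)`,
`f` is strictly concave on `[0, ∞)`, `f(1) = 0`, and
`f'(1) = Σ [h₀ − h] log h`. -/
theorem kl_gain_formula_concave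
    {Θ : Type*} [Fintype Θ] [Nonempty Θ]
    (h₀ h : Θ → ℝ)
    (h₀pos : ∀ θ, 0 < h₀ θ)
    (hpos : ∀ θ, 0 < h θ)
    (h₀sum : ∑ θ, h₀ θ = 1)
    (hsum : ∑ θ, h θ = 1)
    (hnonunif : ∃ θ₁ θ₂, h θ₁ ≠ h θ₂)
    (f : ℝ → ℝ)
    (hf : f = fun α =>
      (∑ θ, h₀ θ * Real.log (h₀ θ / h θ)) -
        ∑ θ, h₀ θ * Real.log (h₀ θ / (h θ ^ α / ∑ θ', h θ' ^ α))) :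
    (∀ α : ℝ, 0 ≤ α →
      f α = (α - 1) * (∑ θ, h₀ θ * Real.log (h θ)) -
        Real.log (∑ θ, h θ ^ α)) ∧
    StrictConcaveOn ℝ (Set.Ici 0) f ∧
    f 1 = 0 ∧
    HasDerivAt f (∑ θ, (h₀ θ - h θ) * Real.log (h θ)) 1 :=
  kl_gain_formula_concave_general h₀ h hpos h₀sum hsum hnonunif f hf
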